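/- For the weight function w(i,j) = (i+j)/i², the minimal cost b(n) of jumping from n down to 1 satisfies b(n) < W for all n ≥ 1, where W = Σ_{k=1}^∞ (p_k + p_{k+1})/p_k². -/

import Mathlib

/-- Minimal cost `b(n)` of a jumping pattern from `n` down to `1`:
`b(1)=0` and `b(n) = min_{1 <= k < n} (w(k,n) + b(k))`. -/
noncomputable def minCost (w : ℕ → ℕ → ℝ) : ℕ → ℝ
  | 0 => 0
  | 1 => 0
  | (n+2) =>
    ((Finset.Icc 1 (n+1)).attach).inf'
      ⟨⟨1, by simp⟩, Finset.mem_attach _ _⟩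
      (fun k => w k.1 (n+2) + minCost w k.1)
decreasing_by
  have := Finset.mem_Icc.mp k.2; omega

/-- The lexicographically-first cost-minimizing jump sequence. -/
noncomputable def jumpSeq (w : ℕ → ℕ → ℝ) : ℕ → ℕ := fun n =>
  if n ≤ 1 then 1
  else sInf {k | 1 ≤ k ∧ k < n ∧ w k n + minCost w k = minCost w n}

/-- The Pell numbers. -/
def pell : ℕ → ℤ
  | 0 => 0
  | 1 => 1
  | (n+2) => 2 * pell (n+1) + pell n


/-! Jump from `n` to the largest Pell number `p_m < n`. Since `n ≤ p_{m+1}`, this jump costs at most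
`(p_m + p_{m+1}) / p_m²`, and the Pell numbers below `p_m` are reached recursively, so
`b(n) ≤ ∑_{k < m} (p_k + p_{k+1}) / p_k²`. The inequality is strict because all terms of the series
are positive, and the series converges because `p_k ≥ 2^(k-1)`. -/

section minCost

variable {w : ℕ → ℕ → ℝ}

theorem minCost_one : minCost w 1 = 0 := by
  rw [minCost]

theorem minCost_le_add {k n : ℕ} (hk : 1 ≤ k) (hkn : k < n) :
    minCost w n ≤ w k n + minCost w k := by
  obtain ⟨n, rfl⟩ : ∃ m, n = m + 2 := ⟨n - 2, by omega⟩
  rw [minCost]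
  exact Finset.inf'_le _ (Finset.mem_attach _ ⟨k, Finset.mem_Icc.mpr ⟨hk, by omega⟩⟩)

theorem minCost_le_sum_of_ladder (a : ℕ → ℕ) (c : ℕ → ℝ) (ha0 : a 0 = 1) (ha : ∀ k, 1 ≤ a k)
    (hc : ∀ k, 0 ≤ c k) (hjump : ∀ k n, a k < n → n ≤ a (k + 1) → w (a k) n ≤ c k) :
    ∀ m n, 1 ≤ n → n ≤ a m → minCost w n ≤ ∑ k ∈ Finset.range m, c k := by
  intro m
  induction m with
  | zero =>
    intro n hn1 hn
    obtain rfl : n = 1 := by omega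
    simp [minCost_one]
  | succ m ih =>
    intro n hn1 hn
    rw [Finset.sum_range_succ]
    rcases le_or_gt n (a m) with hle | hlt
    · linarith [ih n hn1 hle, hc m]
    · calc minCost w n ≤ w (a m) n + minCost w (a m) := minCost_le_add (ha m) hlt
        _ ≤ c m + ∑ k ∈ Finset.range m, c k := add_le_add (hjump m n hlt hn) (ih _ (ha m) le_rfl)
        _ = _ := add_comm _ _

end minCost

def pellNat : ℕ → ℕ
  | 0 => 0
  | 1 => 1
  | (n+2) => 2 * pellNat (n+1) + pellNat n

theorem natCast_pellNat : ∀ k, (pellNat k : ℤ) = pell k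
  | 0 => rfl
  | 1 => rfl
  | (k+2) => by
    simp only [pellNat, pell, Nat.cast_add, Nat.cast_mul, Nat.cast_ofNat,
      natCast_pellNat (k+1), natCast_pellNat k]

theorem pellNat_succ_succ (k : ℕ) : pellNat (k + 2) = 2 * pellNat (k + 1) + pellNat k := rfl

theorem pellNat_le_succ : ∀ k, pellNat k ≤ pellNat (k + 1)
  | 0 => Nat.zero_le _
  | (k+1) => by rw [pellNat_succ_succ]; omega

theorem two_pow_le_pellNat_succ : ∀ k, 2 ^ k ≤ pellNat (k + 1)
  | 0 => le_rfl
  | (k+1) => by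
    rw [pellNat_succ_succ, pow_succ]
    linarith [two_pow_le_pellNat_succ k]

theorem one_le_pellNat_succ (k : ℕ) : 1 ≤ pellNat (k + 1) :=
  Nat.one_le_two_pow.trans (two_pow_le_pellNat_succ k)

theorem pellNat_succ_succ_le (k : ℕ) : pellNat (k + 2) ≤ 3 * pellNat (k + 1) := by
  rw [pellNat_succ_succ]
  linarith [pellNat_le_succ k]

theorem le_pellNat_succ (n : ℕ) : n ≤ pellNat (n + 1) :=
  (Nat.lt_two_pow_self).le.trans (two_pow_le_pellNat_succ n)

noncomputable def pellTerm (k : ℕ) : ℝ :=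
  ((pellNat (k + 1) : ℝ) + pellNat (k + 2)) / (pellNat (k + 1) : ℝ) ^ 2

theorem pellTerm_eq (k : ℕ) :
    pellTerm k = ((pell (k + 1) : ℝ) + (pell (k + 2) : ℝ)) / (pell (k + 1) : ℝ) ^ 2 := by
  simp only [pellTerm, ← natCast_pellNat, Int.cast_natCast]

theorem pellTerm_pos (k : ℕ) : 0 < pellTerm k := by
  have := one_le_pellNat_succ k
  unfold pellTerm
  positivity

theorem pellTerm_le_geometric (k : ℕ) : pellTerm k ≤ 4 * (1 / 2 : ℝ) ^ k := by
  have hpow : (2 : ℝ) ^ k ≤ pellNat (k + 1) := by exact_mod_cast two_pow_le_pellNat_succ k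
  have hthree : (pellNat (k + 2) : ℝ) ≤ 3 * pellNat (k + 1) := by
    exact_mod_cast pellNat_succ_succ_le k
  have hpos : (0 : ℝ) < pellNat (k + 1) := lt_of_lt_of_le (by positivity) hpow
  calc pellTerm k ≤ 4 * (pellNat (k + 1) : ℝ) / (pellNat (k + 1) : ℝ) ^ 2 := by
        unfold pellTerm; gcongr; linarith
    _ = 4 / (pellNat (k + 1) : ℝ) := by field_simp
    _ ≤ 4 / 2 ^ k := by gcongr
    _ = 4 * (1 / 2 : ℝ) ^ k := by rw [one_div_pow, mul_one_div]

theorem summable_pellTerm : Summable pellTerm :=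
  (summable_geometric_two.mul_left 4).of_nonneg_of_le (fun k ↦ (pellTerm_pos k).le)
    pellTerm_le_geometric

theorem sum_range_pellTerm_lt_tsum (n : ℕ) : ∑ k ∈ Finset.range n, pellTerm k < ∑' k, pellTerm k :=
  calc ∑ k ∈ Finset.range n, pellTerm k < ∑ k ∈ Finset.range (n + 1), pellTerm k := by
        rw [Finset.sum_range_succ]; linarith [pellTerm_pos n]
    _ ≤ ∑' k, pellTerm k :=
        summable_pellTerm.sum_le_tsum _ (fun k _ ↦ (pellTerm_pos k).le)

theorem minCost_le_sum_pellTerm (w : ℕ → ℕ → ℝ)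
    (hw : ∀ i j : ℕ, w i j = ((i : ℝ) + j) / (i : ℝ) ^ 2) {m n : ℕ} (hn : 1 ≤ n)
    (hnm : n ≤ pellNat (m + 1)) : minCost w n ≤ ∑ k ∈ Finset.range m, pellTerm k := by
  refine minCost_le_sum_of_ladder (fun k ↦ pellNat (k + 1)) pellTerm rfl one_le_pellNat_succ
    (fun k ↦ (pellTerm_pos k).le) (fun k n _ hn ↦ ?_) m n hn hnm
  have : (n : ℝ) ≤ pellNat (k + 2) := by exact_mod_cast hn
  rw [hw, pellTerm]
  gcongr

theorem stmt_8 (w : ℕ → ℕ → ℝ)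
    (hw : ∀ i j : ℕ, w i j = ((i : ℝ) + j) / (i : ℝ) ^ 2) :
    ∀ n : ℕ, 1 ≤ n →
      minCost w n < ∑' k : ℕ, ((pell (k+1) : ℝ) + (pell (k+2) : ℝ)) / (pell (k+1) : ℝ) ^ 2 := by
  intro n hn
  simp only [← pellTerm_eq]
  exact (minCost_le_sum_pellTerm w hw hn (le_pellNat_succ n)).trans_lt
    (sum_range_pellTerm_lt_tsum n)
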